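/- arXiv:math/0306164 — 6 statements merged into one kernel-verified Lean document; each statement's English description precedes it below -/
import Mathlib

section
/- The multiple Bernoulli polynomials satisfy the difference equation B_{r,n}(z + ωⱼ | ω) − B_{r,n}(z | ω) = n · B_{r−1,n−1}(z | ω⁻(j)), where ω⁻(j) denotes the tuple ω with ωⱼ removed. -/
noncomputable section
open Complex BigOperators

lemma coeff_zero_of_hasSum_zero {c : ℕ → ℂ} {ε : ℝ} (hε : 0 < ε)
    (h : ∀ t : ℂ, t ≠ 0 → ‖t‖ < ε →
      HasSum (fun n : ℕ => c n * t ^ n / (n.factorial : ℂ)) 0) (n : ℕ) : c n = 0 := by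
  set a : ℕ → ℂ := fun m => c m / m.factorial with ha
  have hterm : ∀ t : ℂ, ∀ m : ℕ, c m * t ^ m / (m.factorial : ℂ) = a m * t ^ m := by
    intro t m; rw [ha]; ring
  set p := FormalMultilinearSeries.ofScalars ℂ a with hp
  have hpn : ∀ t : ℂ, ∀ m : ℕ, (p m fun _ => t) = a m * t ^ m := by
    intro t m
    rw [hp, FormalMultilinearSeries.ofScalars_apply_eq, smul_eq_mul]
  have hnorm : ∀ m : ℕ, ‖p m‖ = ‖a m‖ := by
    intro m
    rw [hp, FormalMultilinearSeries.ofScalars,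
      norm_smul (a m) (ContinuousMultilinearMap.mkPiAlgebraFin ℂ m ℂ),
      ContinuousMultilinearMap.norm_mkPiAlgebraFin, mul_one]
  -- the series has positive radius
  have ht0ne : ((ε / 2 : ℝ) : ℂ) ≠ 0 := by
    simp only [ne_eq, Complex.ofReal_eq_zero]; linarith
  have ht0lt : ‖((ε / 2 : ℝ) : ℂ)‖ < ε := by
    rw [Complex.norm_real, Real.norm_eq_abs, abs_of_pos (by linarith)]; linarith
  have hsum0 := h _ ht0ne ht0lt
  have hsum : Summable fun m : ℕ => ‖a m * ((ε / 2 : ℝ) : ℂ) ^ m‖ := by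
    rw [summable_norm_iff]
    exact (hsum0.summable).congr fun m => hterm _ m
  have hr2 : (0:ℝ) ≤ ε / 2 := by linarith
  set rr : NNReal := ⟨ε / 2, hr2⟩ with hrr
  have hrad : (rr : ENNReal) ≤ p.radius := by
    apply p.le_radius_of_summable
    apply hsum.congr
    intro m
    rw [hnorm, norm_mul, norm_pow]
    congr 1
    rw [Complex.norm_real, Real.norm_eq_abs, abs_of_pos (by linarith : (0:ℝ) < ε / 2), hrr]
    rfl
  have hradpos : 0 < p.radius :=
    lt_of_lt_of_le (ENNReal.coe_pos.mpr (show 0 < rr by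
      rw [← NNReal.coe_pos, hrr]; show (0:ℝ) < ε / 2; linarith)) hrad
  have hball := p.hasFPowerSeriesOnBall hradpos
  have hat := hball.hasFPowerSeriesAt
  -- p.sum vanishes on the punctured ball
  have hzero : ∀ t : ℂ, t ≠ 0 → ‖t‖ < ε → p.sum t = 0 := by
    intro t ht hlt
    have h1 : HasSum (fun m : ℕ => p m fun _ => t) 0 := by
      apply ((h t ht hlt).congr_fun fun m => ?_)
      rw [hpn, hterm]
    exact h1.tsum_eq
  -- value at 0 is 0 by continuity
  have hcont : ContinuousAt p.sum 0 := hat.continuousAt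
  have hev : ∀ᶠ t : ℂ in nhdsWithin 0 {(0:ℂ)}ᶜ, p.sum t = 0 := by
    have hb : Metric.ball (0:ℂ) ε ∈ nhds (0:ℂ) := Metric.ball_mem_nhds _ hε
    filter_upwards [self_mem_nhdsWithin, nhdsWithin_le_nhds hb] with t ht htb
    exact hzero t ht (by simpa using mem_ball_zero_iff.mp htb)
  have hsum00 : p.sum 0 = 0 := by
    have h1 : Filter.Tendsto p.sum (nhdsWithin 0 {(0:ℂ)}ᶜ) (nhds (p.sum 0)) :=
      hcont.tendsto.mono_left nhdsWithin_le_nhds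
    have h2 : Filter.Tendsto p.sum (nhdsWithin 0 {(0:ℂ)}ᶜ) (nhds 0) :=
      Filter.Tendsto.congr' (hev.mono fun t h => h.symm) tendsto_const_nhds
    exact tendsto_nhds_unique h1 h2
  have hev' : p.sum =ᶠ[nhds (0:ℂ)] 0 := by
    have hb : Metric.ball (0:ℂ) ε ∈ nhds (0:ℂ) := Metric.ball_mem_nhds _ hε
    filter_upwards [hb] with t htb
    rcases eq_or_ne t 0 with rfl | ht
    · simpa using hsum00
    · simpa using hzero t ht (by simpa using mem_ball_zero_iff.mp htb)
  have hp0 : p = 0 := hat.eq_zero_of_eventually hev'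
  have han : a = 0 := by
    rwa [hp, FormalMultilinearSeries.ofScalars_series_eq_zero] at hp0
  have : c n / (n.factorial : ℂ) = 0 := congrFun han n
  rcases div_eq_zero_iff.mp this with h' | h'
  · exact h'
  · exact absurd h' (Nat.cast_ne_zero.mpr n.factorial_ne_zero)

/-- `B : ℕ → ℂ → ℂ` is the family of multiple Bernoulli polynomials attached to
periods `ω`, characterized by the generating function
`t^r e^{zt} / ∏ⱼ (e^{ωⱼ t} - 1) = ∑ₙ B n z · tⁿ/n!` for `t` near `0`. -/
def IsMultBernoulli {r : ℕ} (ω : Fin r → ℂ) (B : ℕ → ℂ → ℂ) : Prop :=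
  ∃ ε > 0, ∀ (z t : ℂ), t ≠ 0 → ‖t‖ < ε →
    HasSum (fun n : ℕ => B n z * t ^ n / (n.factorial : ℂ))
      (t ^ r * Complex.exp (z * t) / ∏ j, (Complex.exp (ω j * t) - 1))

/-- Difference equation: B_{r,n}(z + ωⱼ | ω) - B_{r,n}(z | ω) = n·B_{r-1,n-1}(z | ω⁻(j)). -/
theorem multBernoulli_difference {r : ℕ} (ω : Fin (r + 1) → ℂ) (hω : ∀ j, ω j ≠ 0)
    (j : Fin (r + 1)) (B : ℕ → ℂ → ℂ) (B' : ℕ → ℂ → ℂ)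
    (hB : IsMultBernoulli ω B)
    (hB' : IsMultBernoulli (fun k : Fin r => ω (j.succAbove k)) B')
    (n : ℕ) (hn : 1 ≤ n) (z : ℂ) :
    B n (z + ω j) - B n z = (n : ℂ) * B' (n - 1) z := by
  obtain ⟨ε, hε, hS⟩ := hB
  obtain ⟨ε', hε', hS'⟩ := hB'
  set c : ℕ → ℂ := fun m => (B m (z + ω j) - B m z) - (m : ℂ) * B' (m - 1) z with hc
  have habsω : 0 < ‖ω j‖ := norm_pos_iff.mpr (hω j)
  set ε₀ : ℝ := min (min ε ε') (1 / ‖ω j‖) with hε₀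
  have hε₀pos : 0 < ε₀ := lt_min (lt_min hε hε') (by positivity)
  have key : ∀ t : ℂ, t ≠ 0 → ‖t‖ < ε₀ →
      HasSum (fun m : ℕ => c m * t ^ m / (m.factorial : ℂ)) 0 := by
    intro t ht hlt
    have hlt1 : ‖t‖ < ε :=
      lt_of_lt_of_le hlt (le_trans (min_le_left _ _) (min_le_left _ _))
    have hlt2 : ‖t‖ < ε' :=
      lt_of_lt_of_le hlt (le_trans (min_le_left _ _) (min_le_right _ _))
    have hlt3 : ‖t‖ < 1 / ‖ω j‖ :=
      lt_of_lt_of_le hlt (min_le_right _ _)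
    -- nonvanishing of exp(ωⱼ t) - 1
    have hEω : Complex.exp (ω j * t) - 1 ≠ 0 := by
      intro hzero
      have h1 : Complex.exp (ω j * t) = 1 := sub_eq_zero.mp hzero
      obtain ⟨k, hk⟩ := Complex.exp_eq_one_iff.mp h1
      have habs : ‖ω j * t‖ < 1 := by
        rw [norm_mul]
        calc ‖ω j‖ * ‖t‖
            < ‖ω j‖ * (1 / ‖ω j‖) := by
              exact mul_lt_mul_of_pos_left hlt3 habsω
          _ = 1 := by field_simp
      rcases eq_or_ne k 0 with rfl | hk0
      · simp at hk
        rcases hk with h' | h'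
        · exact hω j h'
        · exact ht h'
      · have : (1 : ℝ) ≤ ‖ω j * t‖ := by
          rw [hk]
          rw [norm_mul, norm_mul, norm_mul, Complex.norm_intCast, Complex.norm_two,
            Complex.norm_real, Real.norm_eq_abs, Complex.norm_I]
          have h2 : (1:ℝ) ≤ |(k:ℝ)| := by
            rw [← Int.cast_abs]
            exact_mod_cast Int.one_le_abs hk0
          nlinarith [Real.pi_gt_three, abs_nonneg ((k:ℝ)), abs_of_pos Real.pi_pos]
        linarith
    set P' : ℂ := ∏ i : Fin r, (Complex.exp (ω (j.succAbove i) * t) - 1) with hP'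
    set T : ℂ := t ^ r * Complex.exp (z * t) / P' with hT
    have hprod : ∏ i, (Complex.exp (ω i * t) - 1)
        = (Complex.exp (ω j * t) - 1) * P' :=
      Fin.prod_univ_succAbove (fun i => Complex.exp (ω i * t) - 1) j
    -- first series
    have hA := hS (z + ω j) t ht hlt1
    have hB2 := hS z t ht hlt1
    have hsub0 := hA.sub hB2
    have hval : t ^ (r+1) * Complex.exp ((z + ω j) * t) / ∏ i, (Complex.exp (ω i * t) - 1)
        - t ^ (r+1) * Complex.exp (z * t) / ∏ i, (Complex.exp (ω i * t) - 1) = t * T := by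
      rw [hprod, div_sub_div_same]
      have hnum : t ^ (r+1) * Complex.exp ((z + ω j) * t) - t ^ (r+1) * Complex.exp (z * t)
          = (t * (t ^ r * Complex.exp (z * t))) * (Complex.exp (ω j * t) - 1) := by
        rw [add_mul, Complex.exp_add]; ring
      rw [hnum, mul_comm (Complex.exp (ω j * t) - 1) P',
        mul_div_mul_right _ _ hEω, hT, mul_div_assoc]
    rw [hval] at hsub0
    have hsub : HasSum (fun m : ℕ => (B m (z + ω j) - B m z) * t ^ m / (m.factorial : ℂ))
        (t * T) := by
      apply hsub0.congr_fun
      intro m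
      ring
    -- second series (shifted)
    have hC := (hS' z t ht hlt2).mul_left t
    have hCs : HasSum (fun m : ℕ =>
        (((m+1 : ℕ)) : ℂ) * B' ((m+1) - 1) z * t ^ (m+1) / (((m+1).factorial : ℕ) : ℂ))
        (t * T) := by
      apply hC.congr_fun
      intro m
      have hm1 : ((m : ℂ) + 1) ≠ 0 := Nat.cast_add_one_ne_zero m
      have hmf : ((m.factorial : ℕ) : ℂ) ≠ 0 := Nat.cast_ne_zero.mpr m.factorial_ne_zero
      rw [Nat.add_sub_cancel, Nat.factorial_succ, Nat.cast_mul, pow_succ]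
      push_cast
      field_simp
    have hshift : HasSum (fun m : ℕ => (m : ℂ) * B' (m - 1) z * t ^ m / (m.factorial : ℂ))
        (t * T) := by
      have := (hasSum_nat_add_iff (f := fun m : ℕ =>
        (m : ℂ) * B' (m - 1) z * t ^ m / (m.factorial : ℂ)) 1).mp (by exact_mod_cast hCs)
      simpa using this
    have := hsub.sub hshift
    simp only [sub_self] at this
    apply this.congr_fun
    intro m
    rw [hc]
    ring
  have hcn : c n = 0 := coeff_zero_of_hasSum_zero hε₀pos key n
  exact sub_eq_zero.mp hcn
end
end

section
/- The multiple Bernoulli polynomials satisfy B_{r,n}(z | ω) + B_{r,n}(z | ω[j]) = −n · B_{r−1,n−1}(z | ω⁻(j)). -/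
noncomputable section
open Complex BigOperators

open FormalMultilinearSeries

lemma hasSum_coeffs_eq_zero {c : ℕ → ℂ} {ε : ℝ} (hε : 0 < ε)
    (h : ∀ t : ℂ, t ≠ 0 → ‖t‖ < ε → HasSum (fun n => c n * t ^ n) 0) :
    ∀ n, c n = 0 := by
  set p : FormalMultilinearSeries ℂ ℂ ℂ := ofScalars ℂ c with hp
  have ht0 : ((ε/2 : ℝ) : ℂ) ≠ 0 := by
    simp only [ne_eq, Complex.ofReal_eq_zero]
    positivity
  have habs : ‖((ε/2 : ℝ) : ℂ)‖ < ε := by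
    rw [Complex.norm_real, Real.norm_eq_abs, abs_of_pos (by positivity)]; linarith
  have hsum := (h _ ht0 habs).summable
  have htend : Filter.Tendsto (fun n => ‖c n * ((ε/2 : ℝ) : ℂ) ^ n‖) Filter.atTop (nhds 0) := by
    simpa using hsum.tendsto_atTop_zero.norm
  obtain ⟨C, hC⟩ := htend.bddAbove_range
  have hrad : 0 < p.radius := by
    have hle : ((ε/2 : ℝ).toNNReal : ENNReal) ≤ p.radius := by
      apply p.le_radius_of_bound C
      intro n
      have h1 : ‖p n‖ = ‖c n‖ := ofScalars_norm ℂ c n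
      have h2 : ‖c n * ((ε/2 : ℝ) : ℂ) ^ n‖ ≤ C := hC (Set.mem_range_self n)
      rw [h1]
      calc ‖c n‖ * ((ε/2 : ℝ).toNNReal : ℝ) ^ n
          = ‖c n * ((ε/2 : ℝ) : ℂ) ^ n‖ := by
            rw [norm_mul, norm_pow, Complex.norm_real, Real.norm_eq_abs,
              Real.coe_toNNReal _ (by positivity), abs_of_pos (by positivity)]
        _ ≤ C := h2
    refine lt_of_lt_of_le ?_ hle
    simp only [ENNReal.coe_pos, Real.toNNReal_pos]
    positivity
  have hat : HasFPowerSeriesAt p.sum p 0 := (p.hasFPowerSeriesOnBall hrad).hasFPowerSeriesAt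
  have hsumeq : ∀ t : ℂ, t ≠ 0 → ‖t‖ < ε → p.sum t = 0 := by
    intro t ht hlt
    have heq : p.sum t = ∑' n, c n * t ^ n := by
      refine tsum_congr fun n => ?_
      rw [hp, ofScalars_apply_eq, smul_eq_mul]
    rw [heq, (h t ht hlt).tsum_eq]
  have hzero0 : p.sum 0 = 0 := by
    have h1 : Filter.Tendsto p.sum (nhdsWithin 0 {(0:ℂ)}ᶜ) (nhds (p.sum 0)) :=
      hat.continuousAt.continuousWithinAt
    have hev : ∀ᶠ t in nhdsWithin 0 {(0:ℂ)}ᶜ, p.sum t = 0 := by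
      filter_upwards [self_mem_nhdsWithin,
        nhdsWithin_le_nhds (Metric.ball_mem_nhds (0:ℂ) hε)] with t ht hball
      exact hsumeq t ht (by simpa [Complex.dist_eq] using hball)
    have h2 : Filter.Tendsto p.sum (nhdsWithin 0 {(0:ℂ)}ᶜ) (nhds 0) :=
      Filter.Tendsto.congr' (Filter.EventuallyEq.symm hev) tendsto_const_nhds
    exact tendsto_nhds_unique h1 h2
  have hev : p.sum =ᶠ[nhds (0:ℂ)] 0 := by
    filter_upwards [Metric.ball_mem_nhds (0:ℂ) hε] with t ht
    by_cases h't : t = 0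
    · simp [h't, hzero0]
    · exact hsumeq t h't (by simpa [Complex.dist_eq] using ht)
  have hp0 : p = 0 := hat.eq_zero_of_eventually hev
  intro n
  have : ofScalars ℂ c n = 0 := by rw [← hp, hp0]; rfl
  exact (ofScalars_eq_zero ℂ n).mp this

lemma hasSum_coeffs_unique {a b : ℕ → ℂ} {s : ℂ → ℂ} {ε : ℝ} (hε : 0 < ε)
    (ha : ∀ t : ℂ, t ≠ 0 → ‖t‖ < ε → HasSum (fun n => a n * t ^ n) (s t))
    (hb : ∀ t : ℂ, t ≠ 0 → ‖t‖ < ε → HasSum (fun n => b n * t ^ n) (s t)) :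
    ∀ n, a n = b n := by
  intro n
  have h := hasSum_coeffs_eq_zero (c := fun n => a n - b n) hε (fun t ht hlt => by
    simpa [sub_mul] using (ha t ht hlt).sub (hb t ht hlt)) n
  exact sub_eq_zero.mp h

lemma exp_mul_ne_one {w t : ℂ} (hw : w ≠ 0) (ht : t ≠ 0)
    (h : ‖w‖ * ‖t‖ < 2 * Real.pi) : Complex.exp (w * t) ≠ 1 := by
  intro hexp
  rw [Complex.exp_eq_one_iff] at hexp
  obtain ⟨m, hm⟩ := hexp
  have hm0 : m ≠ 0 := by
    rintro rfl
    simp only [Int.cast_zero, zero_mul] at hm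
    exact mul_ne_zero hw ht hm
  have h1 : ‖w * t‖ = |(m:ℝ)| * (2 * Real.pi) := by
    rw [hm, norm_mul, norm_mul, norm_mul]
    rw [Complex.norm_intCast, Complex.norm_I, Complex.norm_real, Real.norm_eq_abs, Complex.norm_two,
      abs_of_pos Real.pi_pos]
    ring
  have h2 : (1:ℝ) ≤ |(m:ℝ)| := by
    have := Int.one_le_abs hm0
    exact_mod_cast this
  have h3 := norm_mul w t
  nlinarith [Real.pi_pos]

/-- B_{r,n}(z | ω) + B_{r,n}(z | ω[j]) = -n · B_{r-1,n-1}(z | ω⁻(j)). -/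
theorem multBernoulli_add_flip {r : ℕ} (ω : Fin (r + 1) → ℂ) (hω : ∀ j, ω j ≠ 0)
    (j : Fin (r + 1)) (B B' B'' : ℕ → ℂ → ℂ)
    (hB : IsMultBernoulli ω B)
    (hB' : IsMultBernoulli (Function.update ω j (-(ω j))) B')
    (hB'' : IsMultBernoulli (fun k : Fin r => ω (j.succAbove k)) B'')
    (n : ℕ) (hn : 1 ≤ n) (z : ℂ) :
    B n z + B' n z = -(n : ℂ) * B'' (n - 1) z := by
  obtain ⟨ε₁, hε₁, h1⟩ := hB
  obtain ⟨ε₂, hε₂, h2⟩ := hB'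
  obtain ⟨ε₃, hε₃, h3⟩ := hB''
  set M : ℝ := Finset.univ.sup' ⟨j, Finset.mem_univ j⟩ (fun k => ‖ω k‖) with hM
  have hMpos : 0 < M := by
    rw [hM]
    exact lt_of_lt_of_le (norm_pos_iff.mpr (hω j))
      (Finset.le_sup' (fun k => ‖ω k‖) (Finset.mem_univ j))
  set δ : ℝ := (2 * Real.pi) / M with hδdef
  have hδ : 0 < δ := div_pos (by positivity) hMpos
  set ε : ℝ := min (min ε₁ ε₂) (min ε₃ δ) with hεdef
  have hεpos : 0 < ε := lt_min (lt_min hε₁ hε₂) (lt_min hε₃ hδ)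
  set a : ℕ → ℂ := fun n => (B n z + B' n z) / n.factorial with ha
  set b : ℕ → ℂ := fun n => if n = 0 then 0 else (-(n:ℂ) * B'' (n-1) z) / n.factorial with hb
  set s : ℂ → ℂ := fun t => -t * (t ^ r * Complex.exp (z * t) /
    ∏ k : Fin r, (Complex.exp (ω (j.succAbove k) * t) - 1)) with hs
  have key : ∀ m, a m = b m := by
    refine hasSum_coeffs_unique (s := s) hεpos ?_ ?_
    · -- a side
      intro t ht hlt
      have l1 := h1 z t ht (lt_of_lt_of_le hlt ((min_le_left _ _).trans (min_le_left _ _)))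
      have l2 := h2 z t ht (lt_of_lt_of_le hlt ((min_le_left _ _).trans (min_le_right _ _)))
      have hEne : ∀ w : ℂ, w ≠ 0 → ‖w‖ ≤ M → Complex.exp (w * t) ≠ 1 := by
        intro w hw hwM
        apply exp_mul_ne_one hw ht
        calc ‖w‖ * ‖t‖ ≤ M * ‖t‖ :=
              mul_le_mul_of_nonneg_right hwM (norm_nonneg t)
          _ < M * δ := by
              refine mul_lt_mul_of_pos_left ?_ hMpos
              exact lt_of_lt_of_le hlt ((min_le_right _ _).trans (min_le_right _ _))
          _ = 2 * Real.pi := by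
              rw [hδdef, mul_div_cancel₀ _ (ne_of_gt hMpos)]
      have hQ : (∏ k : Fin r, (Complex.exp (ω (j.succAbove k) * t) - 1)) ≠ 0 :=
        Finset.prod_ne_zero_iff.mpr fun k _ => sub_ne_zero.mpr
          (hEne _ (hω _) (hM ▸ Finset.le_sup' (fun k => ‖ω k‖) (Finset.mem_univ _)))
      have hE1 : Complex.exp (ω j * t) ≠ 1 :=
        hEne _ (hω j) (hM ▸ Finset.le_sup' (fun k => ‖ω k‖) (Finset.mem_univ j))
      have hE0 : Complex.exp (ω j * t) ≠ 0 := Complex.exp_ne_zero _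
      have hP : ∏ k, (Complex.exp (ω k * t) - 1)
          = (Complex.exp (ω j * t) - 1) * ∏ k : Fin r, (Complex.exp (ω (j.succAbove k) * t) - 1) :=
        Fin.prod_univ_succAbove (fun k => Complex.exp (ω k * t) - 1) j
      have hP' : ∏ k, (Complex.exp (Function.update ω j (-(ω j)) k * t) - 1)
          = ((Complex.exp (ω j * t))⁻¹ - 1) *
            ∏ k : Fin r, (Complex.exp (ω (j.succAbove k) * t) - 1) := by
        rw [Fin.prod_univ_succAbove (fun k => Complex.exp (Function.update ω j (-(ω j)) k * t) - 1) j]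
        congr 1
        · rw [Function.update_self, neg_mul, Complex.exp_neg]
        · exact Finset.prod_congr rfl fun k _ => by
            rw [Function.update_of_ne (Fin.succAbove_ne j k)]
      have hE1' : (Complex.exp (ω j * t))⁻¹ - 1 ≠ 0 := by
        rw [sub_ne_zero]
        intro hinv
        apply hE1
        rw [← inv_inv (Complex.exp (ω j * t)), hinv, inv_one]
      have hE1'' : Complex.exp (ω j * t) - 1 ≠ 0 := sub_ne_zero.mpr hE1
      have hvs : t ^ (r+1) * Complex.exp (z * t) / ∏ k, (Complex.exp (ω k * t) - 1)
          + t ^ (r+1) * Complex.exp (z * t) /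
            ∏ k, (Complex.exp (Function.update ω j (-(ω j)) k * t) - 1) = s t := by
        have hinv : (Complex.exp (ω j * t) - 1)⁻¹ + ((Complex.exp (ω j * t))⁻¹ - 1)⁻¹
            = -1 := by
          have h2 : 1 - Complex.exp (ω j * t) ≠ 0 := fun h => hE1'' (by linear_combination -h)
          field_simp
          ring
        rw [hP, hP', hs]
        simp only [div_eq_mul_inv, mul_inv]
        linear_combination (t * t ^ r * Complex.exp (z * t) *
          (∏ k : Fin r, (Complex.exp (ω (j.succAbove k) * t) - 1))⁻¹) * hinv
      have hfun : (fun m : ℕ => a m * t ^ m)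
          = fun m => B m z * t ^ m / m.factorial + B' m z * t ^ m / m.factorial := by
        funext m
        rw [ha]
        ring
      rw [hfun, ← hvs]
      exact l1.add l2
    · -- b side
      intro t ht hlt
      have l3 := h3 z t ht (lt_of_lt_of_le hlt ((min_le_right _ _).trans (min_le_left _ _)))
      have l3' := l3.mul_left (-t)
      have hshift : (fun m : ℕ => b (m+1) * t ^ (m+1))
          = fun m => -t * (B'' m z * t ^ m / m.factorial) := by
        funext m
        rw [hb]
        simp only [Nat.succ_ne_zero, if_false, Nat.add_sub_cancel]
        have hfac : ((m+1).factorial : ℂ) = ((m:ℂ)+1) * m.factorial := by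
          rw [Nat.factorial_succ]
          push_cast
          ring
        have hne : ((m:ℂ)+1) ≠ 0 := Nat.cast_add_one_ne_zero m
        have hne2 : ((m.factorial : ℂ)) ≠ 0 := Nat.cast_ne_zero.mpr (Nat.factorial_ne_zero m)
        rw [hfac]
        field_simp
        push_cast
        ring
      have l4 : HasSum (fun m : ℕ => b (m+1) * t ^ (m+1)) (-t * (t ^ r * Complex.exp (z * t) /
          ∏ k : Fin r, (Complex.exp (ω (j.succAbove k) * t) - 1))) := by
        rw [hshift]; exact l3'
      have l5 := (hasSum_nat_add_iff (f := fun m : ℕ => b m * t ^ m) 1).mp l4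
      simpa [hb, hs] using l5
  have hkey := key n
  obtain ⟨m, rfl⟩ : ∃ m, n = m + 1 := ⟨n - 1, by omega⟩
  rw [ha, hb] at hkey
  simp only [Nat.succ_ne_zero, if_false, Nat.add_sub_cancel] at hkey
  have hne2 : (((m+1).factorial : ℂ)) ≠ 0 := Nat.cast_ne_zero.mpr (Nat.factorial_ne_zero _)
  rw [div_eq_div_iff hne2 hne2] at hkey
  have h' := mul_right_cancel₀ hne2 hkey
  rw [h']
  push_cast
  ring
end
end

section
/- The equal-period Bernoulli polynomials satisfy r · B_{r+1,n}(z+1) = (r−n) · B_{r,n}(z) + n·z · B_{r,n−1}(z). -/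
noncomputable section
open Complex BigOperators

/-!
Let `φ(t) = tʳ e^{zt} / (eᵗ - 1)ʳ`, the generating function of `B_{r,·}(z)`. The generating
function of `B_{r+1,·}(z+1)` is `ψ(t) = φ(t) · t eᵗ / (eᵗ - 1)`, and the quotient rule gives
`t φ'(t) = (r + z t) φ(t) - r ψ(t)`. Comparing coefficients of `tⁿ / n!` on both sides yields the
recursion; since the defining expansions are only asserted for `t ≠ 0`, the comparison goes through
the uniqueness of power series coefficients on a punctured disc.
-/

open Filter FormalMultilinearSeries
open scoped Topology Nat

section PowerSeries

variable {a b : ℕ → ℂ} {ε : ℝ}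

theorem ofReal_le_radius_ofScalars_of_summable
    (h : ∀ t : ℂ, t ≠ 0 → ‖t‖ < ε → Summable fun n => a n * t ^ n) :
    ENNReal.ofReal ε ≤ (ofScalars ℂ a).radius := by
  refine ENNReal.le_of_forall_pos_nnreal_lt fun s hs hsε => ?_
  have hs' : ‖((s : ℝ) : ℂ)‖ < ε := by
    rw [Complex.norm_real, Real.norm_of_nonneg s.coe_nonneg]
    exact (ENNReal.ofReal_lt_ofReal_iff_of_nonneg s.coe_nonneg).mp (by simpa using hsε)
  refine (ofScalars ℂ a).le_radius_of_tendsto (l := 0) ?_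
  have := (h _ (by exact_mod_cast hs.ne') hs').tendsto_atTop_zero.norm
  simpa [ofScalars_norm, norm_mul, norm_pow, Real.norm_of_nonneg s.coe_nonneg] using this

theorem hasSum_mul_deriv_ofScalarsSum {y : ℂ} (hy : ‖y‖ₑ < (ofScalars ℂ a).radius) :
    HasSum (fun n => n * a n * y ^ n) (y * deriv (ofScalarsSum a) y) := by
  have hy' : y ∈ Metric.eball (0 : ℂ) (ofScalars ℂ a).radius := by
    simpa [edist_zero_right] using hy
  have hder := (((ofScalars ℂ a).hasFPowerSeriesOnBall (pos_of_gt hy)).fderiv.hasSum hy').mapL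
    (ContinuousLinearMap.apply ℂ ℂ y)
  simp only [zero_add, ContinuousLinearMap.apply_apply, derivSeries_apply_diag, ofScalars_apply_eq,
    fderiv_eq_smul_deriv, nsmul_eq_mul, smul_eq_mul] at hder
  refine (hasSum_nat_add_iff' 1).mp ?_
  simpa [ofScalarsSum, mul_assoc, pow_succ, mul_left_comm y] using hder

theorem eq_of_hasSum_punctured {S : ℂ → ℂ} (hε : 0 < ε)
    (ha : ∀ t : ℂ, t ≠ 0 → ‖t‖ < ε → HasSum (fun n => a n * t ^ n) (S t))
    (hb : ∀ t : ℂ, t ≠ 0 → ‖t‖ < ε → HasSum (fun n => b n * t ^ n) (S t)) : a = b := by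
  have hpos : 0 < ENNReal.ofReal ε := ENNReal.ofReal_pos.mpr hε
  have hfa := ((ofScalars ℂ a).hasFPowerSeriesOnBall <| hpos.trans_le <|
    ofReal_le_radius_ofScalars_of_summable fun t ht htε => (ha t ht htε).summable).hasFPowerSeriesAt
  have hfb := ((ofScalars ℂ b).hasFPowerSeriesOnBall <| hpos.trans_le <|
    ofReal_le_radius_ofScalars_of_summable fun t ht htε => (hb t ht htε).summable).hasFPowerSeriesAt
  have hfreq : ∃ᶠ t in 𝓝[≠] (0 : ℂ), ofScalarsSum a t = ofScalarsSum b t := by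
    refine Eventually.frequently ?_
    filter_upwards [mem_nhdsWithin_of_mem_nhds (Metric.ball_mem_nhds (0 : ℂ) hε),
      self_mem_nhdsWithin] with t htε ht
    rw [mem_ball_zero_iff] at htε
    simp only [ofScalars_sum_eq, smul_eq_mul, (ha t ht htε).tsum_eq, (hb t ht htε).tsum_eq]
  have := hfa.eq_formalMultilinearSeries_of_eventually hfb
    ((hfa.analyticAt.frequently_eq_iff_eventually_eq hfb.analyticAt).mp hfreq)
  exact (ofScalars_series_eq_iff ℂ a b).mp this

end PowerSeries

theorem Complex.exp_ne_one_of_norm_lt_two_pi {t : ℂ} (ht : t ≠ 0) (htπ : ‖t‖ < 2 * Real.pi) :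
    exp t ≠ 1 := by
  rw [Ne, exp_eq_one_iff]
  rintro ⟨k, rfl⟩
  have hk : k ≠ 0 := by rintro rfl; simp at ht
  have hk1 : (1 : ℝ) ≤ |(k : ℝ)| := by exact_mod_cast Int.one_le_abs hk
  rw [norm_mul, norm_mul, norm_mul, norm_I, Complex.norm_intCast, norm_ofNat, Complex.norm_real,
    Real.norm_of_nonneg Real.pi_pos.le] at htπ
  nlinarith [Real.pi_pos]

def equalPeriodGF (r : ℕ) (z t : ℂ) : ℂ :=
  t ^ r * exp (z * t) / (exp t - 1) ^ r

theorem isMultBernoulli_one_iff {r : ℕ} {B : ℕ → ℂ → ℂ} :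
    IsMultBernoulli (fun _ : Fin r => (1 : ℂ)) B ↔ ∃ ε > 0, ∀ z t : ℂ, t ≠ 0 → ‖t‖ < ε →
      HasSum (fun n => B n z * t ^ n / n !) (equalPeriodGF r z t) := by
  simp [IsMultBernoulli, equalPeriodGF]

theorem mul_deriv_equalPeriodGF (r : ℕ) (z : ℂ) {t : ℂ} (ht : exp t ≠ 1) :
    t * deriv (equalPeriodGF r z) t =
      (r + z * t) * equalPeriodGF r z t - r * equalPeriodGF (r + 1) (z + 1) t := by
  have hden : exp t - 1 ≠ 0 := sub_ne_zero.mpr ht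
  have hnum : HasDerivAt (fun u => u ^ r * exp (z * u))
      (r * t ^ (r - 1) * exp (z * t) + t ^ r * (exp (z * t) * z)) t :=
    (hasDerivAt_pow r t).mul (by simpa using ((hasDerivAt_id t).const_mul z).cexp)
  have hdenom : HasDerivAt (fun u => (exp u - 1) ^ r) (r * (exp t - 1) ^ (r - 1) * exp t) t := by
    simpa using ((hasDerivAt_exp t).sub_const 1).fun_pow r
  have hφ : HasDerivAt (equalPeriodGF r z) _ t := hnum.fun_div hdenom (pow_ne_zero r hden)
  rw [hφ.deriv, equalPeriodGF, equalPeriodGF, add_one_mul z t, exp_add]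
  cases r with
  | zero =>
    simp only [Nat.cast_zero, pow_zero, zero_mul, zero_add, mul_one, one_mul, sub_zero, div_one]
    ring
  | succ m =>
    rw [Nat.add_sub_cancel]
    field_simp
    ring

theorem hasSum_nat_mul_pred_egf {b : ℕ → ℂ} {t S : ℂ}
    (h : HasSum (fun n => b n * t ^ n / n !) S) :
    HasSum (fun n => n * b (n - 1) * t ^ n / n !) (t * S) := by
  refine (hasSum_nat_add_iff' 1).mp ?_
  simp only [Finset.range_one, Finset.sum_singleton, Nat.cast_zero, zero_mul, zero_div, sub_zero]
  refine (h.mul_left t).congr_fun fun n => ?_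
  rw [Nat.add_sub_cancel, Nat.factorial_succ, pow_succ]
  push_cast
  field_simp

theorem eq_of_hasSum_egf_punctured {b c : ℕ → ℂ} {S : ℂ → ℂ} {ε : ℝ} (hε : 0 < ε)
    (hb : ∀ t : ℂ, t ≠ 0 → ‖t‖ < ε → HasSum (fun n => b n * t ^ n / n !) (S t))
    (hc : ∀ t : ℂ, t ≠ 0 → ‖t‖ < ε → HasSum (fun n => c n * t ^ n / n !) (S t)) : b = c := by
  have h := eq_of_hasSum_punctured (a := fun n => b n / n !) (b := fun n => c n / n !) hε
    (by simpa only [div_mul_eq_mul_div] using hb) (by simpa only [div_mul_eq_mul_div] using hc)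
  funext n
  simpa [Nat.factorial_ne_zero] using congrFun h n

theorem hasSum_egf_equalPeriod_recursion {r : ℕ} {z : ℂ} {b : ℕ → ℂ} {ε : ℝ}
    (hb : ∀ t : ℂ, t ≠ 0 → ‖t‖ < ε → HasSum (fun n => b n * t ^ n / n !) (equalPeriodGF r z t))
    {t : ℂ} (ht : t ≠ 0) (htε : ‖t‖ < ε) (ht1 : exp t ≠ 1) :
    HasSum (fun n => ((r - n) * b n + n * z * b (n - 1)) * t ^ n / n !)
      (r * equalPeriodGF (r + 1) (z + 1) t) := by
  set a : ℕ → ℂ := fun n => b n / (n ! : ℂ)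
  have ha : ∀ s : ℂ, s ≠ 0 → ‖s‖ < ε → HasSum (fun n => a n * s ^ n) (equalPeriodGF r z s) :=
    fun s hs hsε => by simpa only [a, div_mul_eq_mul_div] using hb s hs hsε
  have hsum : ofScalarsSum a =ᶠ[𝓝 t] equalPeriodGF r z := by
    filter_upwards [isOpen_ne.mem_nhds ht,
      (isOpen_lt continuous_norm continuous_const).mem_nhds htε] with s hs hsε
    simp only [ofScalars_sum_eq, smul_eq_mul, (ha s hs hsε).tsum_eq]
  have hderiv : HasSum (fun n => n * a n * t ^ n) (t * deriv (equalPeriodGF r z) t) := by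
    rw [← hsum.deriv_eq]
    refine hasSum_mul_deriv_ofScalarsSum (lt_of_lt_of_le ?_
      (ofReal_le_radius_ofScalars_of_summable fun s hs hsε => (ha s hs hsε).summable))
    rwa [← ofReal_norm, ENNReal.ofReal_lt_ofReal_iff_of_nonneg (norm_nonneg t)]
  have hvalue : r * equalPeriodGF (r + 1) (z + 1) t = r * equalPeriodGF r z t -
      t * deriv (equalPeriodGF r z) t + z * (t * equalPeriodGF r z t) := by
    rw [mul_deriv_equalPeriodGF r z ht1]
    ring
  rw [hvalue]
  refine ((((ha t ht htε).mul_left (r : ℂ)).sub hderiv).add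
    ((hasSum_nat_mul_pred_egf (hb t ht htε)).mul_left z)).congr_fun fun n => ?_
  simp only [a]
  ring

theorem multBernoulli_equal_period_recursion_general {r : ℕ} (B B' : ℕ → ℂ → ℂ)
    (hB : IsMultBernoulli (fun _ : Fin r => (1 : ℂ)) B)
    (hB' : IsMultBernoulli (fun _ : Fin (r + 1) => (1 : ℂ)) B')
    (n : ℕ) (z : ℂ) :
    (r : ℂ) * B' n (z + 1) = ((r : ℂ) - (n : ℂ)) * B n z + (n : ℂ) * z * B (n - 1) z := by
  obtain ⟨ε, hε, hφ⟩ := isMultBernoulli_one_iff.mp hB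
  obtain ⟨ε', hε', hψ⟩ := isMultBernoulli_one_iff.mp hB'
  have hδ : 0 < min (min ε ε') (2 * Real.pi) := by positivity
  refine congrFun (eq_of_hasSum_egf_punctured hδ (b := fun m => r * B' m (z + 1))
    (c := fun m => (r - m) * B m z + m * z * B (m - 1) z)
    (S := fun t => r * equalPeriodGF (r + 1) (z + 1) t)
    (fun t ht htδ => ?_) (fun t ht htδ => ?_)) n <;> simp only [lt_min_iff] at htδ
  · simpa only [mul_assoc, mul_div_assoc] using (hψ (z + 1) t ht htδ.1.2).mul_left (r : ℂ)
  · exact hasSum_egf_equalPeriod_recursion (hφ z) ht htδ.1.1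
      (exp_ne_one_of_norm_lt_two_pi ht htδ.2)

/-- r·B_{r+1,n}(z+1) = (r-n)·B_{r,n}(z) + n·z·B_{r,n-1}(z) for equal periods 1. -/
theorem multBernoulli_equal_period_recursion {r : ℕ} (B B' : ℕ → ℂ → ℂ)
    (hB : IsMultBernoulli (fun _ : Fin r => (1 : ℂ)) B)
    (hB' : IsMultBernoulli (fun _ : Fin (r + 1) => (1 : ℂ)) B')
    (n : ℕ) (hn : 1 ≤ n) (z : ℂ) :
    (r : ℂ) * B' n (z + 1) = ((r : ℂ) - (n : ℂ)) * B n z + (n : ℂ) * z * B (n - 1) z :=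
  multBernoulli_equal_period_recursion_general B B' hB hB' n z
end
end

section
/- Felder–Varchenko's modular anomaly polynomial Q(z;τ,σ) = z³/(3τσ) − (τ+σ−1)z²/(2τσ) + (τ²+σ²+1+3τσ−3τ−3σ)z/(6τσ) − (τ+σ−1)(τσ−τ−σ)/(12τσ) equals −(1/3)·B_{3,3}(z | τ, σ, −1). -/
noncomputable section
open Complex BigOperators
open NNReal ENNReal
set_option maxHeartbeats 2000000

lemma coeff_eq_zero_of_hasSum_zero (c : ℕ → ℂ) (ε : ℝ) (hε : 0 < ε)
    (h : ∀ t : ℂ, t ≠ 0 → ‖t‖ < ε → HasSum (fun n => c n * t ^ n) 0) :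
    ∀ n, c n = 0 := by
  classical
  set p : FormalMultilinearSeries ℂ ℂ ℂ :=
    fun n => ContinuousMultilinearMap.mkPiRing ℂ (Fin n) (c n) with hp
  have hpn : ∀ (n : ℕ) (y : ℂ), (p n fun _ => y) = c n * y ^ n := by
    intro n y
    simp [hp, ContinuousMultilinearMap.mkPiRing_apply, smul_eq_mul, mul_comm]
  have hsummable : ∀ y : ℂ, ‖y‖ < ε → Summable (fun n => c n * y ^ n) := by
    intro y hy
    by_cases hy0 : y = 0
    · subst hy0
      apply summable_of_ne_finset_zero (s := {0})
      intro n hn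
      simp at hn
      simp [zero_pow hn]
    · exact (h y hy0 hy).summable
  set f : ℂ → ℂ := fun t => ∑' n, c n * t ^ n with hf
  have hball : HasFPowerSeriesOnBall f p 0 (ENNReal.ofReal ε) := by
    constructor
    · apply ENNReal.le_of_forall_nnreal_lt
      intro r hr
      have hrε : (r : ℝ) < ε := by
        have := (ENNReal.lt_ofReal_iff_toReal_lt (a := (r : ℝ≥0∞)) ENNReal.coe_ne_top).1 hr
        simpa using this
      have hsum : Summable (fun n => c n * (r : ℂ) ^ n) := by
        apply hsummable
        simpa [Complex.norm_of_nonneg r.coe_nonneg] using hrε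
      have hbdd : BddAbove (Set.range fun n => ‖c n * (r:ℂ) ^ n‖) :=
        (hsum.tendsto_atTop_zero.norm).bddAbove_range
      obtain ⟨C, hC⟩ := hbdd
      apply p.le_radius_of_bound C
      intro n
      have hn : ‖p n‖ = ‖c n‖ := by
        simp [hp, ContinuousMultilinearMap.norm_mkPiRing]
      rw [hn]
      have := hC (Set.mem_range_self n)
      simpa [norm_mul, norm_pow, Complex.norm_of_nonneg r.coe_nonneg]
        using this
    · simpa using hε
    · intro y hy
      have hy' : ‖y‖ < ε := by
        simp only [EMetric.mem_ball, edist_eq_enorm_sub, sub_zero] at hy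
        rw [← ofReal_norm, ENNReal.ofReal_lt_ofReal_iff hε] at hy
        simpa using hy
      have hsy := (hsummable y hy').hasSum
      simp only [zero_add]
      convert hsy using 1
      · rfl
      funext n
      exact hpn n y
  -- f vanishes on a punctured neighborhood, hence near 0
  have hzero : ∀ t : ℂ, t ≠ 0 → ‖t‖ < ε → f t = 0 := fun t ht hlt =>
    (h t ht hlt).tsum_eq
  have hf0 : f 0 = 0 := by
    have hcont : ContinuousAt f 0 := hball.analyticAt.continuousAt
    have h1 : Filter.Tendsto f (nhdsWithin 0 {(0:ℂ)}ᶜ) (nhds (f 0)) :=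
      hcont.continuousWithinAt.tendsto
    have h2 : Filter.Tendsto f (nhdsWithin 0 {(0:ℂ)}ᶜ) (nhds 0) := by
      apply Filter.Tendsto.congr' _ tendsto_const_nhds
      filter_upwards [self_mem_nhdsWithin,
        mem_nhdsWithin_of_mem_nhds (Metric.ball_mem_nhds (0:ℂ) hε)] with t ht ht2
      exact (hzero t ht (by simpa using mem_ball_zero_iff.1 ht2)).symm
    exact tendsto_nhds_unique h1 h2
  have heq : f =ᶠ[nhds (0:ℂ)] 0 := by
    filter_upwards [Metric.ball_mem_nhds (0:ℂ) hε] with t ht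
    by_cases ht0 : t = 0
    · simpa [ht0] using hf0
    · exact hzero t ht0 (by simpa using mem_ball_zero_iff.1 ht)
  have hzero_series : HasFPowerSeriesAt (0 : ℂ → ℂ) p 0 :=
    (hball.hasFPowerSeriesAt).congr heq
  have : p = 0 := hzero_series.eq_zero
  intro n
  have := congr_fun this n
  have h1 : c n = p n (fun _ => 1) := by simp [hpn n 1]
  rw [h1, this]
  simp
open Complex BigOperators NNReal ENNReal

lemma summable_norm_of_hasSum_radius (a : ℕ → ℂ) (ε : ℝ)
    (h : ∀ t : ℂ, t ≠ 0 → ‖t‖ < ε → Summable (fun n => a n * t ^ n))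
    (t : ℂ) (ht : ‖t‖ < ε) :
    Summable (fun n => ‖a n * t ^ n‖) := by
  set s : ℝ := (‖t‖ + ε) / 2 with hs
  have hε : 0 < ε := lt_of_le_of_lt (norm_nonneg t) ht
  have hs0 : 0 < s := by rw [hs]; linarith [norm_nonneg t]
  have hts : ‖t‖ < s := by
    rw [hs]; linarith [norm_nonneg t]
  have hsε : s < ε := by rw [hs]; linarith [norm_nonneg t]
  have hsum : Summable (fun n => a n * (s : ℂ) ^ n) := by
    apply h
    · simpa using hs0.ne'
    · simpa [Complex.norm_of_nonneg hs0.le, _root_.abs_of_nonneg hs0.le] using hsε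
  obtain ⟨C, hC⟩ := (hsum.tendsto_atTop_zero.norm).bddAbove_range
  have hCn : ∀ n, ‖a n‖ * s ^ n ≤ C := by
    intro n
    have := hC (Set.mem_range_self n)
    simpa [norm_mul, norm_pow, Complex.norm_of_nonneg hs0.le, _root_.abs_of_nonneg hs0.le] using this
  have hC0 : 0 ≤ C := le_trans (by positivity) (hCn 0)
  refine Summable.of_nonneg_of_le (f := fun n => C * (‖t‖ / s) ^ n)
    (fun n => norm_nonneg _) (fun n => ?_) ?_
  · 
    have h1 : ‖a n * t ^ n‖ = ‖a n‖ * (‖t‖) ^ n := by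
      simp [norm_mul, norm_pow]
    rw [h1]
    have h2 : ‖a n‖ * (‖t‖) ^ n = (‖a n‖ * s ^ n) * (‖t‖ / s) ^ n := by
      rw [mul_assoc, ← mul_pow, mul_div_assoc', mul_div_cancel_left₀ _ hs0.ne']
    rw [h2]
    apply mul_le_mul_of_nonneg_right (hCn n) (by positivity)
  · apply Summable.mul_left
    apply summable_geometric_of_lt_one (by positivity)
    rw [div_lt_one hs0]
    exact hts

/-- Cauchy product step. -/
lemma cauchy_step {f g : ℕ → ℂ} {t F G : ℂ}
    (hf : HasSum (fun n => f n * t ^ n) F) (hg : HasSum (fun n => g n * t ^ n) G)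
    (hfn : Summable fun n => ‖f n * t ^ n‖) (hgn : Summable fun n => ‖g n * t ^ n‖) :
    HasSum (fun n => (∑ kl ∈ Finset.HasAntidiagonal.antidiagonal n, f kl.1 * g kl.2) * t ^ n) (F * G) ∧
      Summable (fun n => ‖(∑ kl ∈ Finset.HasAntidiagonal.antidiagonal n, f kl.1 * g kl.2) * t ^ n‖) := by
  have hkey : ∀ n : ℕ, (∑ kl ∈ Finset.HasAntidiagonal.antidiagonal n, (f kl.1 * t ^ kl.1) * (g kl.2 * t ^ kl.2))
      = (∑ kl ∈ Finset.HasAntidiagonal.antidiagonal n, f kl.1 * g kl.2) * t ^ n := by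
    intro n
    rw [Finset.sum_mul]
    apply Finset.sum_congr rfl
    intro kl hkl
    have : kl.1 + kl.2 = n := Finset.HasAntidiagonal.mem_antidiagonal.mp hkl
    rw [← this, pow_add]
    ring
  have hs := summable_norm_sum_mul_antidiagonal_of_summable_norm hfn hgn
  simp only [hkey] at hs
  have ht := tsum_mul_tsum_eq_tsum_sum_antidiagonal_of_summable_norm hfn hgn
  simp only [hkey] at ht
  rw [hf.tsum_eq, hg.tsum_eq] at ht
  refine ⟨?_, hs⟩
  have := hs.of_norm.hasSum
  rwa [← ht] at this

lemma hasSum_exp_series (w : ℂ) : HasSum (fun n : ℕ => w ^ n / n.factorial) (Complex.exp w) := by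
  have := NormedSpace.expSeries_div_hasSum_exp w
  rwa [← Complex.exp_eq_exp_ℂ] at this

def cser (w : ℂ) : ℕ → ℂ := fun n => if n = 0 then 0 else w ^ n / n.factorial

lemma hasSum_cser (w t : ℂ) :
    HasSum (fun n => cser w n * t ^ n) (Complex.exp (w * t) - 1) := by
  have h1 : HasSum (fun n : ℕ => (w * t) ^ n / n.factorial) (Complex.exp (w * t)) :=
    hasSum_exp_series (w * t)
  have h2 : HasSum (fun n : ℕ => if n = 0 then (1 : ℂ) else 0) 1 := hasSum_ite_eq 0 1
  have := h1.sub h2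
  convert this using 1
  · rfl
  funext n
  rcases Nat.eq_zero_or_pos n with hn | hn
  · subst hn; simp [cser]
  · have hn' : n ≠ 0 := hn.ne'
    simp [cser, hn', mul_pow]
    ring

lemma summable_norm_cser (w t : ℂ) : Summable (fun n => ‖cser w n * t ^ n‖) := by
  have hsum := Real.summable_pow_div_factorial (‖w * t‖)
  refine Summable.of_nonneg_of_le (fun n => norm_nonneg _) (fun n => ?_) hsum
  rcases Nat.eq_zero_or_pos n with hn | hn
  · subst hn; simp [cser]
  · have hn' : n ≠ 0 := hn.ne'
    simp only [cser, hn', if_false, norm_mul, norm_div, norm_pow]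
    rw [mul_pow]
    rw [div_mul_eq_mul_div]
    gcongr
    simp [Complex.norm_natCast]

def rser (z : ℂ) : ℕ → ℂ := fun n => if n < 3 then 0 else z ^ (n - 3) / (n - 3).factorial

lemma hasSum_exp_series' (w : ℂ) : HasSum (fun n : ℕ => w ^ n / n.factorial) (Complex.exp w) := by
  have := NormedSpace.expSeries_div_hasSum_exp w
  rwa [← Complex.exp_eq_exp_ℂ] at this

lemma hasSum_rser (z t : ℂ) :
    HasSum (fun n => rser z n * t ^ n) (t ^ 3 * Complex.exp (z * t)) := by
  have h1 : HasSum (fun n : ℕ => (z * t) ^ n / n.factorial) (Complex.exp (z * t)) :=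
    hasSum_exp_series' (z * t)
  have h2 := h1.mul_left (t ^ 3)
  have h3 : HasSum (fun n => rser z (n + 3) * t ^ (n + 3)) (t ^ 3 * Complex.exp (z * t)) := by
    convert h2 using 1
    · rfl
    funext n
    simp only [rser]
    rw [if_neg (by omega)]
    have : n + 3 - 3 = n := by omega
    rw [this, mul_pow]
    ring
  have h4 := (hasSum_nat_add_iff (f := fun n => rser z n * t ^ n) 3).1 h3
  have h5 : ∑ i ∈ Finset.range 3, rser z i * t ^ i = 0 := by
    simp [Finset.sum_range_succ, rser]
  rwa [h5, add_zero] at h4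

lemma exp_sub_one_ne_zero {w : ℂ} (h0 : w ≠ 0) (h2 : ‖w‖ < 2 * Real.pi) :
    Complex.exp w - 1 ≠ 0 := by
  intro hc
  rw [sub_eq_zero] at hc
  obtain ⟨n, hn⟩ := Complex.exp_eq_one_iff.1 hc
  rcases eq_or_ne n 0 with h | h
  · subst h; simp at hn; exact h0 hn
  · have h1 : ‖w‖ = |(n : ℝ)| * (2 * Real.pi) := by
      rw [hn]
      simp [Complex.norm_intCast, abs_mul, Complex.norm_two, Real.pi_pos.le]
    have h2' : (1 : ℝ) ≤ |(n : ℝ)| := by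
      rw [← Int.cast_abs]
      exact_mod_cast Int.one_le_abs (by simpa using h)
    nlinarith [Real.pi_pos]

/-- Felder–Varchenko's Q(z;τ,σ) equals -(1/3)·B_{3,3}(z | τ, σ, -1). -/
theorem Q_eq_neg_third_B33 (τ σ : ℂ) (hτ : τ ≠ 0) (hσ : σ ≠ 0)
    (B : ℕ → ℂ → ℂ) (hB : IsMultBernoulli ![τ, σ, (-1 : ℂ)] B) (z : ℂ) :
    z ^ 3 / (3 * (τ * σ)) - (τ + σ - 1) / (2 * (τ * σ)) * z ^ 2
      + (τ ^ 2 + σ ^ 2 + 1 + 3 * τ * σ - 3 * τ - 3 * σ) / (6 * (τ * σ)) * z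
      - (τ + σ - 1) * (τ * σ - τ - σ) / (12 * (τ * σ))
    = -(1 / 3) * B 3 z := by
  classical
  obtain ⟨ε, hε, hgen⟩ := hB
  set a : ℕ → ℂ := fun n => B n z / n.factorial with ha
  have hA : ∀ t : ℂ, t ≠ 0 → ‖t‖ < ε → HasSum (fun n => a n * t ^ n)
      (t ^ 3 * Complex.exp (z * t) /
        ((Complex.exp (τ * t) - 1) * ((Complex.exp (σ * t) - 1) * (Complex.exp ((-1) * t) - 1)))) := by
    intro t ht hlt
    have := hgen z t ht hlt
    have heq : (fun n : ℕ => B n z * t ^ n / (n.factorial : ℂ)) = fun n => a n * t ^ n := by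
      funext n; simp only [ha]; ring
    rw [heq] at this
    convert this using 2
    simp [Fin.prod_univ_three]
    ring
  -- radius bound for punctured-ball arguments
  set M : ℝ := max (max (‖τ‖) (‖σ‖)) 1 with hM
  have hM1 : (1 : ℝ) ≤ M := le_max_right _ _
  have hM0 : (0 : ℝ) < M := lt_of_lt_of_le one_pos hM1
  set ε' : ℝ := min ε (2 * Real.pi / M) with hε'
  have hε'0 : 0 < ε' := lt_min hε (by positivity)
  set e2 : ℕ → ℂ := fun n => ∑ kl ∈ Finset.HasAntidiagonal.antidiagonal n, cser σ kl.1 * cser (-1) kl.2 with he2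
  set d : ℕ → ℂ := fun n => ∑ kl ∈ Finset.HasAntidiagonal.antidiagonal n, cser τ kl.1 * e2 kl.2 with hd
  set L : ℕ → ℂ := fun n => ∑ kl ∈ Finset.HasAntidiagonal.antidiagonal n, a kl.1 * d kl.2 with hL
  have key : ∀ n, L n - rser z n = 0 := by
    apply coeff_eq_zero_of_hasSum_zero _ ε' hε'0
    intro t ht hlt
    have hltε : ‖t‖ < ε := lt_of_lt_of_le hlt (min_le_left _ _)
    have hlt2 : ‖t‖ < 2 * Real.pi / M := lt_of_lt_of_le hlt (min_le_right _ _)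
    have habs : ∀ w : ℂ, ‖w‖ ≤ M → ‖w * t‖ < 2 * Real.pi := by
      intro w hw
      rw [norm_mul]
      calc ‖w‖ * ‖t‖ ≤ M * ‖t‖ := by
            apply mul_le_mul_of_nonneg_right hw (norm_nonneg t)
        _ < M * (2 * Real.pi / M) := by
            apply mul_lt_mul_of_pos_left hlt2 hM0
        _ = 2 * Real.pi := by field_simp
    have hτt : Complex.exp (τ * t) - 1 ≠ 0 :=
      exp_sub_one_ne_zero (mul_ne_zero hτ ht) (habs τ ((le_max_left _ _).trans (le_max_left _ _)))
    have hσt : Complex.exp (σ * t) - 1 ≠ 0 :=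
      exp_sub_one_ne_zero (mul_ne_zero hσ ht) (habs σ ((le_max_right _ _).trans (le_max_left _ _)))
    have hnt : Complex.exp ((-1) * t) - 1 ≠ 0 := by
      apply exp_sub_one_ne_zero (mul_ne_zero (by norm_num) ht)
      apply habs
      simp [hM1]
    -- summability of the B-series
    have hAt := hA t ht hltε
    have hAn : Summable (fun n => ‖a n * t ^ n‖) := by
      apply summable_norm_of_hasSum_radius a ε _ t hltε
      intro t' ht' hlt'
      exact (hA t' ht' hlt').summable
    have hCτ := hasSum_cser τ t
    have hCσ := hasSum_cser σ t
    have hCν := hasSum_cser (-1) t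
    have step1 := cauchy_step hCσ hCν (summable_norm_cser σ t) (summable_norm_cser (-1) t)
    have step2 := cauchy_step hCτ step1.1 (summable_norm_cser τ t) step1.2
    have step3 := cauchy_step hAt step2.1 hAn step2.2
    have hval : (t ^ 3 * Complex.exp (z * t) /
        ((Complex.exp (τ * t) - 1) * ((Complex.exp (σ * t) - 1) * (Complex.exp ((-1) * t) - 1)))) *
        ((Complex.exp (τ * t) - 1) * ((Complex.exp (σ * t) - 1) * (Complex.exp ((-1) * t) - 1)))
        = t ^ 3 * Complex.exp (z * t) := by
      apply div_mul_cancel₀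
      exact mul_ne_zero hτt (mul_ne_zero hσt hnt)
    rw [hval] at step3
    have hR := hasSum_rser z t
    have := step3.1.sub hR
    rw [sub_self] at this
    convert this using 1
    · rfl
    funext n
    rw [sub_mul]
  have keyn : ∀ n, L n = rser z n := fun n => sub_eq_zero.1 (key n)
  have hc3 := keyn 3
  have hc4 := keyn 4
  have hc5 := keyn 5
  have hc6 := keyn 6
  simp only [hL, hd, he2, ha, Finset.Nat.sum_antidiagonal_eq_sum_range_succ_mk,
    Finset.sum_range_succ, Finset.sum_range_zero, cser, rser, Nat.factorial] at hc3 hc4 hc5 hc6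
  norm_num at hc3 hc4 hc5 hc6
  have hP : τ * σ ≠ 0 := mul_ne_zero hτ hσ
  have hb3 : B 3 z * (τ * σ) =
      -(1/2)*z - (3/2)*z^2 - z^3 + (1/4)*σ + (3/2)*σ*z + (3/2)*σ*z^2 - (1/4)*σ^2
        - (1/2)*σ^2*z + (1/4)*τ + (3/2)*τ*z + (3/2)*τ*z^2 - (3/4)*τ*σ - (3/2)*τ*σ*z
        + (1/4)*τ*σ^2 - (1/4)*τ^2 - (1/2)*τ^2*z + (1/4)*τ^2*σ := by
    linear_combination ((σ - σ^2 + τ - 3*τ*σ + τ*σ^2 - τ^2 + τ^2*σ)/4) * hc3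
      + ((-1 + 3*σ - σ^2 + 3*τ - 3*τ*σ - τ^2)/2) * hc4
      + (-3 + 3*σ + 3*τ) * hc5 + (-6 : ℂ) * hc6
  have hB3 : B 3 z = (-(1/2)*z - (3/2)*z^2 - z^3 + (1/4)*σ + (3/2)*σ*z + (3/2)*σ*z^2 - (1/4)*σ^2
        - (1/2)*σ^2*z + (1/4)*τ + (3/2)*τ*z + (3/2)*τ*z^2 - (3/4)*τ*σ - (3/2)*τ*σ*z
        + (1/4)*τ*σ^2 - (1/4)*τ^2 - (1/2)*τ^2*z + (1/4)*τ^2*σ) / (τ * σ) := by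
    rw [eq_div_iff hP]; exact hb3
  rw [hB3]
  have h3 : (3:ℂ) * (τ * σ) ≠ 0 := by simp [hτ, hσ]
  have h2 : (2:ℂ) * (τ * σ) ≠ 0 := by simp [hτ, hσ]
  have h6 : (6:ℂ) * (τ * σ) ≠ 0 := by simp [hτ, hσ]
  have h12 : (12:ℂ) * (τ * σ) ≠ 0 := by simp [hτ, hσ]
  rw [div_mul_eq_mul_div, div_mul_eq_mul_div, div_sub_div _ _ h3 h2,
    div_add_div _ _ (mul_ne_zero h3 h2) h6,
    div_sub_div _ _ (mul_ne_zero (mul_ne_zero h3 h2) h6) h12,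
    ← mul_div_assoc, ← neg_div,
    div_eq_div_iff (mul_ne_zero (mul_ne_zero (mul_ne_zero h3 h2) h6) h12) hP]
  ring
end
end

section
/- For |x| < 1 and |q₀|,...,|qᵣ| < 1 in ℂ, the multiple q-shifted factorial satisfies (x; q)^{(r)}_∞ = exp(−Li_{r+2}(x; q)), i.e. ∏_{j₀,...,jᵣ≥0} (1 − x q₀^{j₀}⋯qᵣ^{jᵣ}) = exp(−Σ_{n≥1} xⁿ / (n ∏_{j=0}^r (1 − qⱼⁿ))). -/
noncomputable section
open Complex BigOperators

set_option maxHeartbeats 1000000 in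
lemma pi_geom (n : ℕ) (w : Fin n → ℂ) (hw : ∀ j, ‖w j‖ < 1) :
    HasSum (fun ν : Fin n → ℕ => ∏ j, w j ^ ν j) (∏ j, (1 - w j)⁻¹) ∧
    Summable (fun ν : Fin n → ℕ => ‖∏ j, w j ^ ν j‖) := by
  induction n with
  | zero =>
    constructor
    · simpa using hasSum_unique (fun _ : Fin 0 → ℕ => (1 : ℂ))
    · simpa using (hasSum_unique (fun _ : Fin 0 → ℕ => (1 : ℝ))).summable
  | succ n ih =>
    obtain ⟨ih1, ih2⟩ := ih (fun j => w j.succ) (fun j => hw j.succ)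
    have h0 : HasSum (fun k : ℕ => w 0 ^ k) (1 - w 0)⁻¹ :=
      hasSum_geometric_of_norm_lt_one (hw 0)
    have h0n : Summable fun k : ℕ => ‖w 0 ^ k‖ := by
      simpa [norm_pow] using summable_geometric_of_lt_one (norm_nonneg _) (hw 0)
    have hs : Summable (fun p : ℕ × (Fin n → ℕ) =>
        w 0 ^ p.1 * ∏ j : Fin n, w j.succ ^ p.2 j) := by
      apply Summable.of_norm
      have h2 := h0n.mul_of_nonneg ih2 (fun _ => norm_nonneg _) (fun _ => norm_nonneg _)
      apply h2.congr
      intro p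
      simp [norm_mul]
    have hP := h0.mul ih1 hs
    have heq : ((fun ν : Fin (n + 1) → ℕ => ∏ j, w j ^ ν j) ∘ (Fin.consEquiv fun _ : Fin (n + 1) => ℕ))
        = fun p : ℕ × (Fin n → ℕ) => w 0 ^ p.1 * ∏ j : Fin n, w j.succ ^ p.2 j := by
      funext p
      simp [Fin.consEquiv, Fin.prod_univ_succ]
    constructor
    · rw [← (Fin.consEquiv fun _ : Fin (n + 1) => ℕ).hasSum_iff, heq, Fin.prod_univ_succ]
      convert hP using 2
    · rw [← (Fin.consEquiv fun _ : Fin (n + 1) => ℕ).summable_iff]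
      have : ((fun ν : Fin (n + 1) → ℕ => ‖∏ j, w j ^ ν j‖) ∘ (Fin.consEquiv fun _ : Fin (n + 1) => ℕ))
          = fun p : ℕ × (Fin n → ℕ) => ‖w 0 ^ p.1‖ * ‖∏ j : Fin n, w j.succ ^ p.2 j‖ := by
        funext p
        simp [Fin.consEquiv, Fin.prod_univ_succ, norm_mul]
      rw [this]
      have h2 := h0n.mul_of_nonneg ih2 (fun _ => norm_nonneg _) (fun _ => norm_nonneg _)
      convert h2 using 2

set_option maxHeartbeats 1000000 in
/-- For `|x| < 1` and `|qⱼ| < 1`, the multiple q-shifted factorial equals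
`exp(-Li_{r+2}(x;q))`. -/
theorem qShiftedFactorial_eq_exp_neg_qPolylog (r : ℕ) (x : ℂ) (q : Fin (r + 1) → ℂ)
    (hx : ‖x‖ < 1) (hq : ∀ j, ‖q j‖ < 1) :
    (∏' ν : Fin (r + 1) → ℕ, (1 - x * ∏ j, q j ^ ν j))
      = Complex.exp
        (-∑' n : ℕ, x ^ (n + 1) / ((n + 1 : ℂ) * ∏ j, (1 - q j ^ (n + 1)))) := by
  set z : (Fin (r + 1) → ℕ) → ℂ := fun ν => x * ∏ j, q j ^ ν j with hzdef
  have hqn : ∀ j, ‖q j‖ < 1 := hq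
  have hzn : ∀ ν, ‖z ν‖ < 1 := by
    intro ν
    have h1 : ‖∏ j, q j ^ ν j‖ ≤ 1 := by
      rw [norm_prod]
      apply Finset.prod_le_one (fun j _ => norm_nonneg _)
      intro j _
      rw [norm_pow]
      exact pow_le_one₀ (norm_nonneg _) (hqn j).le
    calc ‖z ν‖ = ‖x‖ * ‖∏ j, q j ^ ν j‖ := norm_mul _ _
      _ ≤ ‖x‖ * 1 := by gcongr
      _ < 1 := by simpa using hx
  have hF : ∀ ν, (1 : ℂ) - z ν ≠ 0 := by
    intro ν h
    have h1 := hzn ν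
    rw [show z ν = 1 by linear_combination -h] at h1
    simp at h1
  -- the log expansions
  have hlog : ∀ ν, HasSum (fun n : ℕ => z ν ^ (n + 1) / ((n : ℂ) + 1))
      (-Complex.log (1 - z ν)) := by
    intro ν
    have h := Complex.hasSum_taylorSeries_neg_log (hzn ν)
    have h' := (hasSum_nat_add_iff' (f := fun n : ℕ => z ν ^ n / (n : ℂ)) 1).mpr h
    simpa using h'
  -- the double-indexed family and its summability
  set g : (Fin (r + 1) → ℕ) × ℕ → ℂ := fun p => z p.1 ^ (p.2 + 1) / ((p.2 : ℂ) + 1)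
    with hgdef
  have hgn : Summable fun p : (Fin (r + 1) → ℕ) × ℕ => ‖g p‖ := by
    have hx2 : Summable fun m : ℕ => ‖x‖ * ‖x‖ ^ m :=
      (summable_geometric_of_lt_one (norm_nonneg _) hx).mul_left _
    have hb := Summable.mul_of_nonneg ((pi_geom (r + 1) q hqn).2) hx2
      (fun _ => norm_nonneg _) (fun m => by positivity)
    refine hb.of_nonneg_of_le (fun _ => norm_nonneg _) ?_
    rintro ⟨ν, n⟩
    have h1 : ‖g (ν, n)‖ ≤ ‖z ν‖ ^ (n + 1) := by
      rw [hgdef]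
      simp only [norm_div, norm_pow]
      refine div_le_of_le_mul₀ ?_ (by positivity) ?_
      · positivity
      · have : (1 : ℝ) ≤ ‖(n : ℂ) + 1‖ := by
          have : ((n : ℂ) + 1) = ((n + 1 : ℕ) : ℂ) := by push_cast; ring
          rw [this, Complex.norm_natCast]
          exact_mod_cast Nat.one_le_iff_ne_zero.mpr (Nat.succ_ne_zero n)
        nlinarith [pow_nonneg (norm_nonneg (z ν)) (n + 1)]
    refine h1.trans ?_
    have h2 : ‖z ν‖ ^ (n + 1) = (‖x‖ * ‖x‖ ^ n) * ‖∏ j, q j ^ ν j‖ ^ (n + 1) := by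
      rw [hzdef]
      simp only [norm_mul, mul_pow, pow_succ', norm_prod, norm_pow]
      ring
    rw [h2]
    have h3 : ‖∏ j, q j ^ ν j‖ ^ (n + 1) ≤ ‖∏ j, q j ^ ν j‖ := by
      refine pow_le_of_le_one ?_ ?_ (Nat.succ_ne_zero n)
      · exact norm_nonneg _
      · rw [norm_prod]
        apply Finset.prod_le_one (fun j _ => norm_nonneg _)
        intro j _
        rw [norm_pow]
        exact pow_le_one₀ (norm_nonneg _) (hqn j).le
    calc (‖x‖ * ‖x‖ ^ n) * ‖∏ j, q j ^ ν j‖ ^ (n + 1)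
        ≤ (‖x‖ * ‖x‖ ^ n) * ‖∏ j, q j ^ ν j‖ := by
          refine mul_le_mul_of_nonneg_left h3 (by positivity)
      _ = ‖∏ j, q j ^ ν j‖ * (‖x‖ * ‖x‖ ^ n) := by ring
  have hgS : Summable g := hgn.of_norm
  -- sum of logs
  have hfib : ∀ ν, HasSum (fun n => g (ν, n)) (-Complex.log (1 - z ν)) := fun ν => hlog ν
  have hlogsum : HasSum (fun ν => -Complex.log (1 - z ν)) (∑' p, g p) :=
    hgS.hasSum.prod_fiberwise hfib
  have hlogsum' : HasSum (fun ν => Complex.log (1 - z ν)) (-∑' p, g p) := by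
    simpa using hlogsum.neg
  -- the infinite product
  have hfun : (fun ν => Complex.exp (Complex.log (1 - z ν))) = fun ν => 1 - z ν :=
    funext fun ν => Complex.exp_log (hF ν)
  have hprod := hlogsum'.cexp
  simp only [Function.comp_def] at hprod
  rw [hfun] at hprod
  rw [hprod.tprod_eq]
  congr 1
  -- evaluate the double sum
  have hswap : ∑' p, g p = ∑' n : ℕ, ∑' ν : Fin (r + 1) → ℕ, g (ν, n) := by
    rw [← (Equiv.prodComm ℕ (Fin (r + 1) → ℕ)).tsum_eq g]
    exact Summable.tsum_prod' hgS.prod_symm hgS.prod_symm.prod_factor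
  rw [hswap]
  congr 1
  apply tsum_congr
  intro n
  -- inner sum over ν for fixed n
  have hw : ∀ j, ‖q j ^ (n + 1)‖ < 1 := by
    intro j
    rw [norm_pow]
    exact pow_lt_one₀ (norm_nonneg _) (hqn j) (Nat.succ_ne_zero n)
  have hgeo := (pi_geom (r + 1) (fun j => q j ^ (n + 1)) hw).1
  have hmul := hgeo.mul_left (x ^ (n + 1) / ((n : ℂ) + 1))
  have heqf : (fun ν : Fin (r + 1) → ℕ =>
      x ^ (n + 1) / ((n : ℂ) + 1) * ∏ j, (q j ^ (n + 1)) ^ ν j) = fun ν => g (ν, n) := by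
    funext ν
    have hpp : (∏ j, q j ^ ν j) ^ (n + 1) = ∏ j, (q j ^ (n + 1)) ^ ν j := by
      rw [← Finset.prod_pow]
      exact Finset.prod_congr rfl fun j _ => pow_right_comm _ _ _
    rw [hgdef]
    simp only [hzdef, mul_pow, hpp]
    ring
  calc ∑' ν : Fin (r + 1) → ℕ, g (ν, n)
      = x ^ (n + 1) / ((n : ℂ) + 1) * ∏ j, (1 - q j ^ (n + 1))⁻¹ := by
        rw [← heqf]; exact hmul.tsum_eq
    _ = x ^ (n + 1) / (((n : ℂ) + 1) * ∏ j, (1 - q j ^ (n + 1))) := by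
        rw [Finset.prod_inv_distrib, ← div_eq_mul_inv, div_div]
end
end

section
/- Let Im τ > 0, Im σ > 0, and define the elliptic gamma function Γ(z,τ,σ) = ∏_{j,k=0}^∞ (1 − e^{2πi((j+1)τ + (k+1)σ − z)}) / (1 − e^{2πi(jτ + kσ + z)}), defined at z where no denominator factor vanishes. Then Γ satisfies the difference equation Γ(z + τ, τ, σ) = θ₀(z, σ) · Γ(z, τ, σ), where θ₀(z,σ) = ∏_{j=0}^∞ (1 − e^{2πi((j+1)σ − z)})(1 − e^{2πi(jσ + z)}). -/
noncomputable section
open Complex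

/-- The theta function `θ₀(z,τ)`. -/
def theta0 (z τ : ℂ) : ℂ :=
  ∏' j : ℕ, (1 - Complex.exp (2 * Real.pi * Complex.I * (((j : ℂ) + 1) * τ - z))) *
    (1 - Complex.exp (2 * Real.pi * Complex.I * ((j : ℂ) * τ + z)))

/-- The elliptic gamma function `Γ(z,τ,σ)`. -/
def ellipticGamma (z τ σ : ℂ) : ℂ :=
  ∏' p : ℕ × ℕ,
    (1 - Complex.exp (2 * Real.pi * Complex.I *
        (((p.1 : ℂ) + 1) * τ + ((p.2 : ℂ) + 1) * σ - z))) /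
    (1 - Complex.exp (2 * Real.pi * Complex.I *
        ((p.1 : ℂ) * τ + (p.2 : ℂ) * σ + z)))

/-! With `q = e(τ)`, `p = e(σ)`, `x = e(z)` and `y = e(σ - z)`, where `e(w) = exp(2πiw)`, one has
`Γ(z) = P(qy) / P(x)` for the double `q`-Pochhammer symbol `P(c) = ∏_{j,k} (1 - q^j p^k c)`, and
`θ₀(z, σ) = A(y) A(x)` with `A(c) = ∏_k (1 - p^k c)`. Splitting off the row `j = 0` gives
`P(c) = A(c) P(qc)`, and since `z ↦ z + τ` replaces `x` by `qx` and `qy` by `y`,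
`Γ(z + τ) = P(y) / P(qx) = A(y) P(qy) / (P(x) / A(x)) = θ₀(z, σ) Γ(z)`.
Absolute convergence makes every product converge, and the condition on `z` keeps `P(x) ≠ 0`. -/

def expTwoPiI (w : ℂ) : ℂ := exp (2 * Real.pi * I * w)

lemma expTwoPiI_add (a b : ℂ) : expTwoPiI (a + b) = expTwoPiI a * expTwoPiI b := by
  rw [expTwoPiI, expTwoPiI, expTwoPiI, mul_add, exp_add]

lemma expTwoPiI_nat_mul (n : ℕ) (w : ℂ) : expTwoPiI (n * w) = expTwoPiI w ^ n := by
  rw [expTwoPiI, expTwoPiI, ← exp_nat_mul, mul_left_comm]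

lemma expTwoPiI_nat_mul_add_nat_mul_add (j k : ℕ) (τ σ c : ℂ) :
    expTwoPiI (j * τ + k * σ + c) = expTwoPiI τ ^ j * expTwoPiI σ ^ k * expTwoPiI c := by
  rw [expTwoPiI_add, expTwoPiI_add, expTwoPiI_nat_mul, expTwoPiI_nat_mul]

lemma norm_expTwoPiI_lt_one {w : ℂ} (hw : 0 < w.im) : ‖expTwoPiI w‖ < 1 :=
  UpperHalfPlane.norm_exp_two_pi_I_lt_one ⟨w, hw⟩

lemma expTwoPiI_eq_one_iff {w : ℂ} : expTwoPiI w = 1 ↔ ∃ m : ℤ, w = m := by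
  have h2πI : 2 * (Real.pi : ℂ) * I ≠ 0 := by simp [Real.pi_ne_zero]
  simp only [expTwoPiI, exp_eq_one_iff, mul_comm _ (2 * (Real.pi : ℂ) * I),
    mul_right_inj' h2πI]

section Pochhammer

variable {R : Type*} [CommRing R] [TopologicalSpace R]

def qPochhammer (p c : R) : R := ∏' k : ℕ, (1 - p ^ k * c)

def doubleQPochhammer (q p c : R) : R := ∏' jk : ℕ × ℕ, (1 - q ^ jk.1 * p ^ jk.2 * c)

variable {𝕜 : Type*} [NormedField 𝕜] {q p : 𝕜}

lemma summable_norm_pow_mul_pow (hq : ‖q‖ < 1) (hp : ‖p‖ < 1) (c : 𝕜) :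
    Summable fun jk : ℕ × ℕ => ‖q ^ jk.1 * p ^ jk.2 * c‖ := by
  simp only [norm_mul (_ * _) c]
  exact ((summable_norm_geometric_of_norm_lt_one hq).mul_norm
    (summable_norm_geometric_of_norm_lt_one hp)).mul_right _

variable [CompleteSpace 𝕜]

lemma hasProd_qPochhammer (hp : ‖p‖ < 1) (c : 𝕜) :
    HasProd (fun k : ℕ => 1 - p ^ k * c) (qPochhammer p c) := by
  simp only [qPochhammer, sub_eq_add_neg]
  refine (multipliable_one_add_of_summable (f := fun k : ℕ => -(p ^ k * c)) ?_).hasProd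
  simpa only [norm_neg, norm_mul, norm_pow] using
    (summable_geometric_of_lt_one (norm_nonneg p) hp).mul_right ‖c‖

lemma hasProd_doubleQPochhammer (hq : ‖q‖ < 1) (hp : ‖p‖ < 1) (c : 𝕜) :
    HasProd (fun jk : ℕ × ℕ => 1 - q ^ jk.1 * p ^ jk.2 * c) (doubleQPochhammer q p c) := by
  simp only [doubleQPochhammer, sub_eq_add_neg]
  refine (multipliable_one_add_of_summable
    (f := fun jk : ℕ × ℕ => -(q ^ jk.1 * p ^ jk.2 * c)) ?_).hasProd
  simpa only [norm_neg] using summable_norm_pow_mul_pow hq hp c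

lemma hasProd_qPochhammer_pow_mul (hq : ‖q‖ < 1) (hp : ‖p‖ < 1) (c : 𝕜) :
    HasProd (fun j : ℕ => qPochhammer p (q ^ j * c)) (doubleQPochhammer q p c) := by
  refine (hasProd_doubleQPochhammer hq hp c).prod_fiberwise fun j => ?_
  convert hasProd_qPochhammer hp (q ^ j * c) using 2 with k
  ring

lemma doubleQPochhammer_ne_zero (hq : ‖q‖ < 1) (hp : ‖p‖ < 1) {c : 𝕜}
    (hc : ∀ j k : ℕ, 1 - q ^ j * p ^ k * c ≠ 0) : doubleQPochhammer q p c ≠ 0 := by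
  simp only [doubleQPochhammer, sub_eq_add_neg]
  refine tprod_one_add_ne_zero_of_summable (fun jk => ?_) ?_
  · simpa [sub_eq_add_neg] using hc jk.1 jk.2
  · simpa only [norm_neg] using summable_norm_pow_mul_pow hq hp c

lemma doubleQPochhammer_eq_qPochhammer_mul (hq : ‖q‖ < 1) (hp : ‖p‖ < 1) (c : 𝕜) :
    doubleQPochhammer q p c = qPochhammer p c * doubleQPochhammer q p (q * c) := by
  have hshift : (fun j : ℕ => qPochhammer p (q ^ (j + 1) * c)) =
      fun j : ℕ => qPochhammer p (q ^ j * (q * c)) := by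
    simp only [pow_succ, mul_assoc]
  have hrows := hasProd_qPochhammer_pow_mul hq hp (q * c)
  calc doubleQPochhammer q p c = ∏' j : ℕ, qPochhammer p (q ^ j * c) :=
        (hasProd_qPochhammer_pow_mul hq hp c).tprod_eq.symm
    _ = qPochhammer p (q ^ 0 * c) * ∏' j : ℕ, qPochhammer p (q ^ (j + 1) * c) :=
        tprod_eq_zero_mul' (hshift ▸ hrows.multipliable)
    _ = qPochhammer p c * doubleQPochhammer q p (q * c) := by
        rw [hshift, hrows.tprod_eq, pow_zero, one_mul]

end Pochhammer

lemma ellipticGamma_eq_div {z τ σ : ℂ} (hτ : 0 < τ.im) (hσ : 0 < σ.im)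
    (hz : doubleQPochhammer (expTwoPiI τ) (expTwoPiI σ) (expTwoPiI z) ≠ 0) :
    ellipticGamma z τ σ =
      doubleQPochhammer (expTwoPiI τ) (expTwoPiI σ) (expTwoPiI τ * expTwoPiI (σ - z)) /
        doubleQPochhammer (expTwoPiI τ) (expTwoPiI σ) (expTwoPiI z) := by
  have hP := hasProd_doubleQPochhammer (norm_expTwoPiI_lt_one hτ) (norm_expTwoPiI_lt_one hσ)
  rw [← ((hP _).div₀ (hP _) hz).tprod_eq]
  refine tprod_congr fun ⟨j, k⟩ => ?_
  change (1 - expTwoPiI ((j + 1) * τ + (k + 1) * σ - z)) / (1 - expTwoPiI (j * τ + k * σ + z)) = _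
  rw [show ((j : ℂ) + 1) * τ + (k + 1) * σ - z = j * τ + k * σ + (τ + (σ - z)) by ring,
    expTwoPiI_nat_mul_add_nat_mul_add, expTwoPiI_nat_mul_add_nat_mul_add, expTwoPiI_add]

lemma theta0_eq_qPochhammer_mul {z σ : ℂ} (hσ : 0 < σ.im) :
    theta0 z σ = qPochhammer (expTwoPiI σ) (expTwoPiI (σ - z)) *
      qPochhammer (expTwoPiI σ) (expTwoPiI z) := by
  have hA := hasProd_qPochhammer (norm_expTwoPiI_lt_one hσ)
  rw [← ((hA _).mul (hA _)).tprod_eq]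
  refine tprod_congr fun k => ?_
  change (1 - expTwoPiI ((k + 1) * σ - z)) * (1 - expTwoPiI (k * σ + z)) = _
  rw [show ((k : ℂ) + 1) * σ - z = k * σ + (σ - z) by ring, expTwoPiI_add, expTwoPiI_add,
    expTwoPiI_nat_mul]

lemma one_sub_pow_mul_pow_expTwoPiI_ne_zero {z τ σ : ℂ}
    (hz : ∀ (j k : ℕ) (m : ℤ), z ≠ -(j : ℂ) * τ - (k : ℂ) * σ + (m : ℂ)) (j k : ℕ) :
    1 - expTwoPiI τ ^ j * expTwoPiI σ ^ k * expTwoPiI z ≠ 0 := by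
  rw [sub_ne_zero, ne_comm, ← expTwoPiI_nat_mul_add_nat_mul_add, Ne, expTwoPiI_eq_one_iff]
  rintro ⟨m, hm⟩
  exact hz j k m (by linear_combination hm)

/-- Difference equation: Γ(z+τ,τ,σ) = θ₀(z,σ)·Γ(z,τ,σ). -/
theorem ellipticGamma_difference (z τ σ : ℂ) (hτ : 0 < τ.im) (hσ : 0 < σ.im)
    (hz : ∀ (j k : ℕ) (m : ℤ), z ≠ -(j : ℂ) * τ - (k : ℂ) * σ + (m : ℂ)) :
    ellipticGamma (z + τ) τ σ = theta0 z σ * ellipticGamma z τ σ := by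
  have hq := norm_expTwoPiI_lt_one hτ
  have hp := norm_expTwoPiI_lt_one hσ
  have hPx := doubleQPochhammer_eq_qPochhammer_mul hq hp (expTwoPiI z)
  have hPy := doubleQPochhammer_eq_qPochhammer_mul hq hp (expTwoPiI (σ - z))
  have hPx0 := doubleQPochhammer_ne_zero hq hp (one_sub_pow_mul_pow_expTwoPiI_ne_zero hz)
  have hAPqx0 := hPx ▸ hPx0
  have hqx : expTwoPiI (z + τ) = expTwoPiI τ * expTwoPiI z := by rw [expTwoPiI_add, mul_comm]
  have hqy : expTwoPiI τ * expTwoPiI (σ - (z + τ)) = expTwoPiI (σ - z) := by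
    rw [← expTwoPiI_add]
    ring_nf
  rw [ellipticGamma_eq_div hτ hσ (hqx ▸ right_ne_zero_of_mul hAPqx0), hqx, hqy,
    ellipticGamma_eq_div hτ hσ hPx0, theta0_eq_qPochhammer_mul hσ, hPx, hPy]
  field_simp [left_ne_zero_of_mul hAPqx0]
end
end
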